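/- Let q ∈ [1,∞], let G, Ĝ ∈ ℝ^{m×p}, Ẑ ∈ ℝ^m, λ ≥ 0, and let β⁰ ∈ ℝ^p with nonempty support S = {j : β⁰_j ≠ 0}. Suppose ‖Ẑ − Ĝβ⁰‖_∞ ≤ λ, let β̂ be an ℓ1-norm minimizer over {β : ‖Ẑ − Ĝβ‖_∞ ≤ λ}, and suppose additionally that 2 |S| ‖G − Ĝ‖_max ≤ (1/2) CIF_q(S, G) and CIF_q(S, G) > 0. Then ‖β̂ − β⁰‖_q ≤ 4 |S|^{1/q} λ / CIF_q(S, G). -/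

import Mathlib

open scoped ENNReal

/-- The ℓq norm of a vector `u ∈ ℝ^p`, for `q ∈ [1, ∞]` (via the `PiLp` norm). -/
noncomputable def lqNorm (q : ℝ≥0∞) [Fact (1 ≤ q)] {p : ℕ} (u : Fin p → ℝ) : ℝ :=
  ‖(WithLp.equiv q (Fin p → ℝ)).symm u‖

/-- The cone invertibility factor
`CIF_q(J, M) := inf { |J|^{1/q} ‖Mu‖_∞ / ‖u‖_q : u ≠ 0, ‖u_{Jᶜ}‖₁ ≤ ‖u_J‖₁ }`,
with the convention `|J|^{1/∞} = 1`. -/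
noncomputable def CIF (q : ℝ≥0∞) [Fact (1 ≤ q)] {m p : ℕ} (J : Finset (Fin p))
    (M : Matrix (Fin m) (Fin p) ℝ) : ℝ :=
  sInf {r : ℝ | ∃ u : Fin p → ℝ, u ≠ 0 ∧ (∑ j ∈ Jᶜ, |u j|) ≤ (∑ j ∈ J, |u j|) ∧
    r = (J.card : ℝ) ^ (q⁻¹.toReal) * ‖M.mulVec u‖ / lqNorm q u}

/-- The maximum absolute value of the entries of a matrix. -/
noncomputable def matMaxNorm {m p : ℕ} (M : Matrix (Fin m) (Fin p) ℝ) : ℝ :=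
  ⨆ i, ⨆ j, |M i j|

/-!
The minimality of `β̂` puts the error `u = β̂ - β⁰` in the cone `‖u_{Sᶜ}‖₁ ≤ ‖u_S‖₁`, so the
definition of the cone invertibility factor gives `CIF · ‖u‖_q ≤ |S|^{1/q} ‖G u‖_∞`. Feasibility
of both `β⁰` and `β̂` gives `‖Ĝ u‖_∞ ≤ 2λ`, and on the cone Hölder's inequality gives
`‖u‖₁ ≤ 2 |S|^{1 - 1/q} ‖u‖_q`, so `‖(G - Ĝ) u‖_∞ ≤ 2 |S|^{1 - 1/q} ‖G - Ĝ‖_max ‖u‖_q`.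
Hence `CIF · ‖u‖_q ≤ 2 |S|^{1/q} λ + 2 |S| ‖G - Ĝ‖_max ‖u‖_q`, and the closeness assumption
absorbs the last term into half of the left-hand side.
-/

section lqNorm

variable (q : ℝ≥0∞) [Fact (1 ≤ q)] {p : ℕ}

lemma lqNorm_nonneg (u : Fin p → ℝ) : 0 ≤ lqNorm q u :=
  norm_nonneg _

lemma lqNorm_zero : lqNorm q (0 : Fin p → ℝ) = 0 := by
  simp [lqNorm]

lemma lqNorm_pos {u : Fin p → ℝ} (hu : u ≠ 0) : 0 < lqNorm q u := by
  rw [lqNorm, norm_pos_iff]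
  simpa [WithLp.equiv] using hu

lemma abs_le_lqNorm (u : Fin p → ℝ) (j : Fin p) : |u j| ≤ lqNorm q u :=
  PiLp.norm_apply_le ((WithLp.equiv q (Fin p → ℝ)).symm u) j

/-- Hölder's inequality against the indicator of `S`. -/
lemma sum_abs_le_card_rpow_mul_lqNorm (u : Fin p → ℝ) (S : Finset (Fin p)) :
    ∑ j ∈ S, |u j| ≤ (S.card : ℝ) ^ (1 - q⁻¹.toReal) * lqNorm q u := by
  rcases eq_or_ne q ∞ with rfl | hq
  · simpa using Finset.sum_le_card_nsmul S _ _ fun j _ => abs_le_lqNorm ∞ u j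
  have ht : 1 ≤ q.toReal := by
    simpa using ENNReal.toReal_mono hq (Fact.out : (1 : ℝ≥0∞) ≤ q)
  have htpos : 0 < q.toReal := one_pos.trans_le ht
  have hholder := Real.inner_le_weight_mul_Lp_of_nonneg S ht (fun _ => 1) (fun j => |u j|)
    (fun _ => zero_le_one) (fun j => abs_nonneg _)
  simp only [one_mul, Finset.sum_const, nsmul_eq_mul, mul_one] at hholder
  have hrestrict : (∑ j ∈ S, |u j| ^ q.toReal) ^ q.toReal⁻¹ ≤ lqNorm q u := by
    rw [lqNorm, PiLp.norm_eq_sum htpos, one_div]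
    gcongr
    exact Finset.sum_le_sum_of_subset_of_nonneg S.subset_univ fun j _ _ => by positivity
  rw [ENNReal.toReal_inv]
  exact hholder.trans (by gcongr)

end lqNorm

section matMaxNorm

variable {m p : ℕ} (M : Matrix (Fin m) (Fin p) ℝ)

lemma matMaxNorm_nonneg : 0 ≤ matMaxNorm M :=
  Real.iSup_nonneg fun _ => Real.iSup_nonneg fun _ => abs_nonneg _

lemma abs_le_matMaxNorm (i : Fin m) (j : Fin p) : |M i j| ≤ matMaxNorm M :=
  calc |M i j| ≤ ⨆ j', |M i j'| :=
        le_ciSup (f := fun j' => |M i j'|) (Set.finite_range _).bddAbove j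
    _ ≤ matMaxNorm M :=
        le_ciSup (f := fun i' => ⨆ j', |M i' j'|) (Set.finite_range _).bddAbove i

lemma norm_mulVec_le_matMaxNorm_mul (u : Fin p → ℝ) :
    ‖M.mulVec u‖ ≤ matMaxNorm M * ∑ j, |u j| := by
  refine (pi_norm_le_iff_of_nonneg (by positivity [matMaxNorm_nonneg M])).2 fun i => ?_
  rw [Real.norm_eq_abs, Matrix.mulVec, dotProduct, Finset.mul_sum]
  refine (Finset.abs_sum_le_sum_abs _ _).trans (Finset.sum_le_sum fun j _ => ?_)
  rw [abs_mul]
  exact mul_le_mul_of_nonneg_right (abs_le_matMaxNorm M i j) (abs_nonneg _)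

end matMaxNorm

lemma sum_compl_abs_sub_le_sum_abs_sub {p : ℕ} {S : Finset (Fin p)} {β β0 : Fin p → ℝ}
    (hβ0 : ∀ j ∉ S, β0 j = 0) (hl1 : ∑ j, |β j| ≤ ∑ j, |β0 j|) :
    ∑ j ∈ Sᶜ, |(β - β0) j| ≤ ∑ j ∈ S, |(β - β0) j| := by
  rw [← Finset.sum_add_sum_compl S, ← Finset.sum_add_sum_compl S (fun j => |β0 j|)] at hl1
  have hcompl : ∑ j ∈ Sᶜ, |β0 j| = 0 :=
    Finset.sum_eq_zero fun j hj => by simp [hβ0 j (Finset.mem_compl.1 hj)]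
  have hcompl_sub : ∑ j ∈ Sᶜ, |(β - β0) j| = ∑ j ∈ Sᶜ, |β j| :=
    Finset.sum_congr rfl fun j hj => by simp [hβ0 j (Finset.mem_compl.1 hj)]
  have htriangle : ∑ j ∈ S, |β0 j| ≤ ∑ j ∈ S, |β j| + ∑ j ∈ S, |(β - β0) j| := by
    rw [← Finset.sum_add_distrib]
    refine Finset.sum_le_sum fun j _ => ?_
    calc |β0 j| = |β j - (β - β0) j| := by simp
      _ ≤ |β j| + |(β - β0) j| := abs_sub _ _
  linarith

section cone

variable (q : ℝ≥0∞) [Fact (1 ≤ q)] {m p : ℕ} {J : Finset (Fin p)} {u : Fin p → ℝ}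

lemma sum_abs_le_two_mul_card_rpow_mul_lqNorm (hcone : ∑ j ∈ Jᶜ, |u j| ≤ ∑ j ∈ J, |u j|) :
    ∑ j, |u j| ≤ 2 * (J.card : ℝ) ^ (1 - q⁻¹.toReal) * lqNorm q u := by
  rw [← Finset.sum_add_sum_compl J]
  linarith [sum_abs_le_card_rpow_mul_lqNorm q u J]

lemma CIF_mul_lqNorm_le (M : Matrix (Fin m) (Fin p) ℝ)
    (hcone : ∑ j ∈ Jᶜ, |u j| ≤ ∑ j ∈ J, |u j|) :
    CIF q J M * lqNorm q u ≤ (J.card : ℝ) ^ q⁻¹.toReal * ‖M.mulVec u‖ := by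
  rcases eq_or_ne u 0 with rfl | hu
  · rw [lqNorm_zero, mul_zero]
    positivity
  rw [← le_div_iff₀ (lqNorm_pos q hu)]
  refine csInf_le ⟨0, ?_⟩ ⟨u, hu, hcone, rfl⟩
  rintro _ ⟨v, -, -, rfl⟩
  exact div_nonneg (by positivity) (lqNorm_nonneg q v)

lemma lqNorm_le_of_cone (G Ghat : Matrix (Fin m) (Fin p) ℝ) {μ : ℝ}
    (hcone : ∑ j ∈ Jᶜ, |u j| ≤ ∑ j ∈ J, |u j|) (hGhat : ‖Ghat.mulVec u‖ ≤ μ)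
    (hclose : 2 * (J.card : ℝ) * matMaxNorm (G - Ghat) ≤ (1 / 2) * CIF q J G)
    (hCIF : 0 < CIF q J G) :
    lqNorm q u ≤ 2 * (J.card : ℝ) ^ q⁻¹.toReal * μ / CIF q J G := by
  set k : ℝ := (J.card : ℝ)
  set e : ℝ := q⁻¹.toReal
  set N := lqNorm q u
  set δ := matMaxNorm (G - Ghat)
  have hk : k ^ e * k ^ (1 - e) = k := by
    rw [← Real.rpow_add' (Nat.cast_nonneg _) (by norm_num), add_sub_cancel, Real.rpow_one]
  have hGu : ‖G.mulVec u‖ ≤ μ + δ * (2 * k ^ (1 - e) * N) := by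
    have hsplit : G.mulVec u = Ghat.mulVec u + (G - Ghat).mulVec u := by
      rw [Matrix.sub_mulVec, add_sub_cancel]
    rw [hsplit]
    refine (norm_add_le _ _).trans (add_le_add hGhat ?_)
    exact (norm_mulVec_le_matMaxNorm_mul _ u).trans <| mul_le_mul_of_nonneg_left
      (sum_abs_le_two_mul_card_rpow_mul_lqNorm q hcone) (matMaxNorm_nonneg _)
  have hmain : CIF q J G * N ≤ k ^ e * μ + 2 * k * δ * N :=
    calc CIF q J G * N ≤ k ^ e * ‖G.mulVec u‖ := CIF_mul_lqNorm_le q G hcone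
      _ ≤ k ^ e * (μ + δ * (2 * k ^ (1 - e) * N)) := by gcongr
      _ = k ^ e * μ + 2 * (k ^ e * k ^ (1 - e)) * δ * N := by ring
      _ = k ^ e * μ + 2 * k * δ * N := by rw [hk]
  have habsorb : 2 * k * δ * N ≤ (1 / 2) * CIF q J G * N :=
    mul_le_mul_of_nonneg_right hclose (lqNorm_nonneg q u)
  rw [le_div_iff₀ hCIF]
  linarith

end cone

theorem lq_error_bound_population_CIF_general
    (q : ℝ≥0∞) [Fact (1 ≤ q)] (m p : ℕ)
    (G Ghat : Matrix (Fin m) (Fin p) ℝ) (Zhat : Fin m → ℝ) (lam : ℝ)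
    (β0 βhat : Fin p → ℝ) (S : Finset (Fin p))
    (hS : ∀ j, j ∈ S ↔ β0 j ≠ 0)
    (hfeas0 : ‖Zhat - Ghat.mulVec β0‖ ≤ lam)
    (hfeashat : ‖Zhat - Ghat.mulVec βhat‖ ≤ lam)
    (hmin : ∀ β : Fin p → ℝ, ‖Zhat - Ghat.mulVec β‖ ≤ lam →
      (∑ j, |βhat j|) ≤ ∑ j, |β j|)
    (hclose : 2 * (S.card : ℝ) * matMaxNorm (G - Ghat) ≤ (1 / 2) * CIF q S G)
    (hCIF : 0 < CIF q S G) :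
    lqNorm q (βhat - β0) ≤ 4 * (S.card : ℝ) ^ (q⁻¹.toReal) * lam / CIF q S G := by
  have hcone := sum_compl_abs_sub_le_sum_abs_sub (S := S)
    (fun j hj => not_not.1 fun h => hj ((hS j).2 h)) (hmin β0 hfeas0)
  have hGhat : ‖Ghat.mulVec (βhat - β0)‖ ≤ 2 * lam := by
    have hdiff :
        Ghat.mulVec (βhat - β0) = (Zhat - Ghat.mulVec β0) - (Zhat - Ghat.mulVec βhat) := by
      rw [Matrix.mulVec_sub]
      abel
    rw [hdiff, two_mul]
    exact (norm_sub_le _ _).trans (add_le_add hfeas0 hfeashat)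
  calc lqNorm q (βhat - β0)
      ≤ 2 * (S.card : ℝ) ^ q⁻¹.toReal * (2 * lam) / CIF q S G :=
        lqNorm_le_of_cone q G Ghat hcone hGhat hclose hCIF
    _ = 4 * (S.card : ℝ) ^ q⁻¹.toReal * lam / CIF q S G := by ring

/-- If `β⁰` is feasible, `β̂` is an ℓ1-norm minimizer over the feasible set
`{β : ‖Ẑ − Ĝβ‖_∞ ≤ λ}`, `2|S| ‖G − Ĝ‖_max ≤ (1/2) CIF_q(S, G)` and `CIF_q(S, G) > 0`, where
`S` is the (nonempty) support of `β⁰`, then `‖β̂ − β⁰‖_q ≤ 4 |S|^{1/q} λ / CIF_q(S, G)`. -/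
theorem lq_error_bound_population_CIF
    (q : ℝ≥0∞) [Fact (1 ≤ q)] (m p : ℕ)
    (G Ghat : Matrix (Fin m) (Fin p) ℝ) (Zhat : Fin m → ℝ) (lam : ℝ) (hlam : 0 ≤ lam)
    (β0 βhat : Fin p → ℝ) (S : Finset (Fin p))
    (hS : ∀ j, j ∈ S ↔ β0 j ≠ 0) (hSne : S.Nonempty)
    (hfeas0 : ‖Zhat - Ghat.mulVec β0‖ ≤ lam)
    (hfeashat : ‖Zhat - Ghat.mulVec βhat‖ ≤ lam)
    (hmin : ∀ β : Fin p → ℝ, ‖Zhat - Ghat.mulVec β‖ ≤ lam →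
      (∑ j, |βhat j|) ≤ ∑ j, |β j|)
    (hclose : 2 * (S.card : ℝ) * matMaxNorm (G - Ghat) ≤ (1 / 2) * CIF q S G)
    (hCIF : 0 < CIF q S G) :
    lqNorm q (βhat - β0) ≤ 4 * (S.card : ℝ) ^ (q⁻¹.toReal) * lam / CIF q S G :=
  lq_error_bound_population_CIF_general q m p G Ghat Zhat lam β0 βhat S hS hfeas0 hfeashat hmin
    hclose hCIF
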